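/- The right weak order on a finite Coxeter group W is a lattice; in particular it has a unique maximal element w₀, and for every w ∈ W one has ℓ(w) + ℓ(w⁻¹w₀) = ℓ(w₀). -/

import Mathlib

/-!
Left inversions are detected by the reflection cocycle. The assignment `s ↦ (δ_s, s)` lifts to a
homomorphism `W → (W → ZMod 2) ⋊ W`, whose first component `η = inversionParity` satisfies
`η(uv)(t) = η(u)(t) + η(v)(u⁻¹tu)` and `η(w)(t) = 1` exactly when `ℓ(tw) < ℓ(w)`. Hence the left
inversion set of `uv` is that of `u`, symmetric-differenced with the `u`-conjugate of that of `v`,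
and this gives the descent calculus of the right weak order.

A common lower bound `m` of `u` and `v` of maximal length is their meet: a nontrivial common lower
bound `x` has a left descent `s`, which is then a descent of `u` and `v`; the meet of `su` and
`sv`, available by induction on `ℓ(u) + ℓ(v)`, forces `s` to be a descent of `m` and equals `sm`,
so `x ≤ m`. In a finite group an element of maximal length has every simple reflection as a left
descent and therefore lies above everything. A common upper bound of minimal length is then a
join, since its meet with any other common upper bound is again a common upper bound.
-/

open CoxeterSystem

variable {B W : Type*} [Group W] {M : CoxeterMatrix B}

/-- The absolute (reflection) length: minimal number of reflections whose product is `w`. -/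
noncomputable def absLength (cs : CoxeterSystem M W) (w : W) : ℕ :=
  sInf {n | ∃ l : List W, l.length = n ∧ (∀ t ∈ l, cs.IsReflection t) ∧ l.prod = w}

/-- The absolute order: `u ≤_R w` iff `ℓ_R(w) = ℓ_R(u) + ℓ_R(u⁻¹w)`. -/
def absLe (cs : CoxeterSystem M W) (u w : W) : Prop :=
  absLength cs w = absLength cs u + absLength cs (u⁻¹ * w)

/-- The right weak order: `u ≤ w` iff `w = u v` with lengths adding up. -/
def weakLe (cs : CoxeterSystem M W) (u w : W) : Prop :=
  ∃ v, w = u * v ∧ cs.length w = cs.length u + cs.length v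

/-- A Coxeter element: product of all the simple reflections, each exactly once. -/
def IsCoxeterElement (cs : CoxeterSystem M W) (c : W) : Prop :=
  ∃ l : List B, l.Nodup ∧ (∀ i, i ∈ l) ∧ c = cs.wordProd l

open Multiplicative

namespace SemidirectProduct

variable {N G : Type*} [CommGroup N] [Group G] {φ : G →* MulAut N}

theorem right_pow (x : N ⋊[φ] G) (n : ℕ) : (x ^ n).right = x.right ^ n :=
  map_pow rightHom x n

theorem left_pow (x : N ⋊[φ] G) (n : ℕ) :
    (x ^ n).left = ∏ k ∈ Finset.range n, φ (x.right ^ k) x.left := by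
  induction n with
  | zero => rfl
  | succ n ih => rw [pow_succ, mul_left, ih, right_pow, Finset.prod_range_succ]

end SemidirectProduct

theorem Finset.prod_range_two_mul {M : Type*} [CommMonoid M] (f : ℕ → M) (n : ℕ) :
    ∏ k ∈ range (2 * n), f k = ∏ k ∈ range n, f (2 * k) * f (2 * k + 1) := by
  induction n with
  | zero => rfl
  | succ n ih => rw [mul_add, prod_range_succ, prod_range_succ, prod_range_succ, ih, mul_assoc]

theorem SemiconjBy.pow_mul_mul_inv_pow {G : Type*} [Group G] {a c : G}
    (h : SemiconjBy a c c⁻¹) (k : ℕ) : c ^ k * a * (c ^ k)⁻¹ = c ^ (2 * k) * a := by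
  have hk : a * (c ^ k)⁻¹ = c ^ k * a := by
    simpa [inv_pow] using (h.inv_right.pow_right k).eq
  rw [mul_assoc, hk, ← mul_assoc, ← pow_add, two_mul]

namespace CoxeterSystem

def conjArrow {A : Type*} [Monoid A] : W →* MulAut (W → A) :=
  mulAutArrow.comp (ConjAct.toConjAct : W ≃* ConjAct W).toMonoidHom

theorem conjArrow_apply {A : Type*} [Monoid A] (w : W) (f : W → A) (t : W) :
    conjArrow w f t = f (w⁻¹ * t * w) := by
  change f ((ConjAct.toConjAct w)⁻¹ • t) = _
  simp [ConjAct.smul_def]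

theorem conjArrow_mulSingle [DecidableEq W] {A : Type*} [Monoid A] (w t : W) (a : A) :
    conjArrow w (Pi.mulSingle t a) = Pi.mulSingle (w * t * w⁻¹) a := by
  funext x
  simp only [conjArrow_apply, Pi.mulSingle_apply]
  congr 1
  exact propext ⟨fun h => by rw [← h]; group, fun h => by rw [h]; group⟩

theorem mulSingle_mul_mulSingle_pow_eq_one [DecidableEq W] {a c : W} (hac : SemiconjBy a c c⁻¹)
    {m : ℕ} (hc : c ^ m = 1) :
    (⟨Pi.mulSingle a (ofAdd 1) * Pi.mulSingle (c * a) (ofAdd 1), c⟩ :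
      (W → Multiplicative (ZMod 2)) ⋊[conjArrow] W) ^ m = 1 := by
  -- The first component is `∏_{k < 2m} δ_{c^k a}`, where every factor occurs twice as `c ^ m = 1`.
  let δ (k : ℕ) : W → Multiplicative (ZMod 2) := Pi.mulSingle (c ^ k * a) (ofAdd 1)
  have hconj (k : ℕ) :
      conjArrow (c ^ k) (Pi.mulSingle a (ofAdd 1) * Pi.mulSingle (c * a) (ofAdd 1)) =
        δ (2 * k) * δ (2 * k + 1) := by
    have hsucc : c ^ k * (c * a) * (c ^ k)⁻¹ = c ^ (2 * k + 1) * a := by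
      rw [pow_succ', mul_assoc c, ← hac.pow_mul_mul_inv_pow]
      group
    rw [map_mul, conjArrow_mulSingle, conjArrow_mulSingle, hac.pow_mul_mul_inv_pow, hsucc]
  have hper (k : ℕ) : δ (m + k) = δ k := by simp only [δ, pow_add, hc, one_mul]
  have hsq (x : W → Multiplicative (ZMod 2)) : x * x = 1 :=
    funext fun t => (by decide : ∀ y : Multiplicative (ZMod 2), y * y = 1) (x t)
  ext1
  · rw [SemidirectProduct.left_pow]
    simp only [hconj]
    rw [← Finset.prod_range_two_mul, two_mul, Finset.prod_range_add]
    simp only [hper]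
    exact hsq _
  · rw [SemidirectProduct.right_pow]
    exact hc

variable (cs : CoxeterSystem M W)

local prefix:100 "s" => cs.simple
local prefix:100 "ℓ" => cs.length

section Classical

open scoped Classical

noncomputable def inversionGen (i : B) : (W → Multiplicative (ZMod 2)) ⋊[conjArrow] W :=
  ⟨Pi.mulSingle (s i) (ofAdd 1), s i⟩

theorem isLiftable_inversionGen : M.IsLiftable cs.inversionGen := by
  intro i j
  have hprod : cs.inversionGen i * cs.inversionGen j =
      ⟨Pi.mulSingle (s i) (ofAdd 1) * Pi.mulSingle (s i * s j * s i) (ofAdd 1), s i * s j⟩ := by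
    ext1
    · simp [inversionGen, conjArrow_mulSingle]
    · rfl
  rw [hprod]
  exact mulSingle_mul_mulSingle_pow_eq_one (by simp [SemiconjBy, ← mul_assoc])
    (cs.simple_mul_simple_pow i j)

noncomputable def inversionLift : W →* (W → Multiplicative (ZMod 2)) ⋊[conjArrow] W :=
  cs.lift ⟨cs.inversionGen, cs.isLiftable_inversionGen⟩

theorem inversionLift_right (w : W) : (cs.inversionLift w).right = w := by
  have : SemidirectProduct.rightHom.comp cs.inversionLift = MonoidHom.id W :=
    cs.ext_simple fun i => by simp [inversionLift, inversionGen]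
  exact DFunLike.congr_fun this w

noncomputable def inversionParity (w t : W) : ZMod 2 :=
  toAdd ((cs.inversionLift w).left t)

@[simp]
theorem inversionParity_one (t : W) : cs.inversionParity 1 t = 0 := by
  simp [inversionParity]

theorem inversionParity_mul (u v t : W) :
    cs.inversionParity (u * v) t = cs.inversionParity u t + cs.inversionParity v (u⁻¹ * t * u) := by
  simp only [inversionParity, map_mul, SemidirectProduct.mul_left, inversionLift_right,
    Pi.mul_apply, conjArrow_apply, toAdd_mul]

theorem inversionParity_simple (i : B) (t : W) :
    cs.inversionParity (s i) t = if t = s i then 1 else 0 := by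
  simp only [inversionParity, inversionLift, lift_apply_simple, inversionGen, Pi.mulSingle_apply]
  split_ifs <;> rfl

end Classical

theorem inversionParity_simple_mul {i : B} {t : W} (hti : t ≠ s i) (w : W) :
    cs.inversionParity (s i * w) t = cs.inversionParity w (s i * t * s i) := by
  rw [inversionParity_mul, inversionParity_simple, if_neg hti, zero_add, inv_simple]

theorem inversionParity_self {t : W} (ht : cs.IsReflection t) : cs.inversionParity t t = 1 := by
  obtain ⟨w, i, rfl⟩ := ht
  generalize ht : w * s i * w⁻¹ = t
  have hconj : w⁻¹ * t * w = s i := by rw [← ht]; group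
  have hcancel : cs.inversionParity w t + cs.inversionParity w⁻¹ (s i) = 0 := by
    rw [← hconj, ← inversionParity_mul, mul_inv_cancel, inversionParity_one]
  nth_rewrite 1 [← ht, mul_assoc]
  rw [inversionParity_mul, inversionParity_mul, hconj, inv_mul_cancel, one_mul,
    inversionParity_simple, if_pos rfl]
  linear_combination hcancel

theorem length_mul_lt_of_inversionParity_eq_one {w t : W} (ht : cs.IsReflection t)
    (h : cs.inversionParity w t = 1) : ℓ (t * w) < ℓ w := by
  obtain rfl | hw := eq_or_ne w 1
  · simp at h
  obtain ⟨i, hi⟩ := cs.exists_leftDescent_of_ne_one hw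
  by_cases hti : t = s i
  · rwa [hti]
  have ht' : cs.IsReflection (s i * t * s i) := by simpa using ht.conj (s i)
  rw [← cs.simple_mul_simple_cancel_left i (w := w), inversionParity_simple_mul cs hti] at h
  have hlt := length_mul_lt_of_inversionParity_eq_one ht' h
  have hdecomp : t * w = s i * ((s i * t * s i) * (s i * w)) := by
    simp [mul_assoc]
  have hi' := cs.isLeftDescent_iff.mp hi
  calc ℓ (t * w) ≤ ℓ (s i) + ℓ ((s i * t * s i) * (s i * w)) := hdecomp ▸ cs.length_mul_le _ _
    _ < ℓ w := by rw [length_simple]; omega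
termination_by cs.length w
decreasing_by exact hi

theorem inversionParity_eq_one_iff {w t : W} (ht : cs.IsReflection t) :
    cs.inversionParity w t = 1 ↔ cs.IsLeftInversion w t := by
  refine ⟨fun h => ⟨ht, cs.length_mul_lt_of_inversionParity_eq_one ht h⟩, fun ⟨_, hlt⟩ => ?_⟩
  have hback : cs.inversionParity (t * w) t ≠ 1 := fun h => by
    have := cs.length_mul_lt_of_inversionParity_eq_one ht h
    rw [← mul_assoc, ht.mul_self, one_mul] at this
    omega
  have hsplit := cs.inversionParity_mul t (t * w) t
  rw [← mul_assoc, ht.mul_self, one_mul, inv_mul_cancel, one_mul, inversionParity_self cs ht]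
    at hsplit
  rw [hsplit]
  generalize cs.inversionParity (t * w) t = a at hback ⊢
  revert a
  decide

theorem isLeftInversion_mul_iff {u v t : W} (ht : cs.IsReflection t) :
    cs.IsLeftInversion (u * v) t ↔
      Xor (cs.IsLeftInversion u t) (cs.IsLeftInversion v (u⁻¹ * t * u)) := by
  have ht' : cs.IsReflection (u⁻¹ * t * u) := by simpa using ht.conj u⁻¹
  rw [← inversionParity_eq_one_iff cs ht, ← inversionParity_eq_one_iff cs ht,
    ← inversionParity_eq_one_iff cs ht', inversionParity_mul]
  generalize cs.inversionParity u t = a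
  generalize cs.inversionParity v (u⁻¹ * t * u) = b
  revert a b
  decide

theorem one_weakLe (w : W) : weakLe cs 1 w := ⟨w, (one_mul w).symm, by simp⟩

theorem length_le_of_weakLe {u w : W} (h : weakLe cs u w) : ℓ u ≤ ℓ w := by
  obtain ⟨v, -, hl⟩ := h
  omega

theorem eq_of_weakLe_of_length_le {u w : W} (h : weakLe cs u w) (hl : ℓ w ≤ ℓ u) : u = w := by
  obtain ⟨v, rfl, hlen⟩ := h
  have : v = 1 := cs.length_eq_zero_iff.mp (by omega)
  rw [this, mul_one]

theorem weakLe_antisymm {u w : W} (h : weakLe cs u w) (h' : weakLe cs w u) : u = w :=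
  cs.eq_of_weakLe_of_length_le h (cs.length_le_of_weakLe h')

theorem isLeftInversion_of_weakLe {u w t : W} (h : weakLe cs u w) (ht : cs.IsLeftInversion u t) :
    cs.IsLeftInversion w t := by
  obtain ⟨v, rfl, hl⟩ := h
  by_cases hv : cs.IsLeftInversion v (u⁻¹ * t * u)
  · refine ⟨ht.1, ?_⟩
    have hdecomp : t * (u * v) = u * ((u⁻¹ * t * u) * v) := by group
    have := cs.length_mul_le u ((u⁻¹ * t * u) * v)
    rw [← hdecomp] at this
    exact this.trans_lt (by rw [hl]; exact Nat.add_lt_add_left hv.2 _)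
  · exact (cs.isLeftInversion_mul_iff ht.1).mpr (Or.inl ⟨ht, hv⟩)

theorem isLeftDescent_of_weakLe {u w : W} {i : B} (h : weakLe cs u w) (hi : cs.IsLeftDescent u i) :
    cs.IsLeftDescent w i := by
  rw [← isLeftInversion_simple_iff_isLeftDescent] at hi ⊢
  exact cs.isLeftInversion_of_weakLe h hi

theorem simple_mul_weakLe_simple_mul_iff {u w : W} {i : B} (hu : cs.IsLeftDescent u i)
    (hw : cs.IsLeftDescent w i) : weakLe cs (s i * u) (s i * w) ↔ weakLe cs u w := by
  rw [isLeftDescent_iff] at hu hw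
  constructor
  · rintro ⟨v, h, hl⟩
    exact ⟨v, mul_left_cancel (h.trans (mul_assoc _ _ _)), by omega⟩
  · rintro ⟨v, rfl, hl⟩
    exact ⟨v, (mul_assoc _ _ _).symm, by omega⟩

theorem not_isLeftDescent_of_weakLe_simple_mul {g u : W} {i : B} (h : weakLe cs g (s i * u))
    (hu : cs.IsLeftDescent u i) : ¬ cs.IsLeftDescent g i := fun hg =>
  cs.isLeftDescent_iff_not_isLeftDescent_mul.mp hu (cs.isLeftDescent_of_weakLe h hg)

theorem simple_mul_weakLe_of_weakLe_simple_mul {g u : W} {i : B} (h : weakLe cs g (s i * u))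
    (hu : cs.IsLeftDescent u i) : weakLe cs (s i * g) u := by
  have hg : cs.IsLeftDescent (s i * g) i := by
    rw [isLeftDescent_iff_not_isLeftDescent_mul, simple_mul_simple_cancel_left]
    exact cs.not_isLeftDescent_of_weakLe_simple_mul h hu
  rw [← cs.simple_mul_weakLe_simple_mul_iff hg hu, simple_mul_simple_cancel_left]
  exact h

theorem weakLe_simple_mul_of_not_isLeftDescent {x u : W} {i : B} (h : weakLe cs x u)
    (hu : cs.IsLeftDescent u i) (hx : ¬ cs.IsLeftDescent x i) : weakLe cs x (s i * u) := by
  obtain ⟨v, rfl, hl⟩ := h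
  rw [← isLeftInversion_simple_iff_isLeftDescent] at hu hx
  have hv : cs.IsLeftInversion v (x⁻¹ * s i * x) := by
    rcases (cs.isLeftInversion_mul_iff (cs.isReflection_simple i)).mp hu with h | h
    · exact absurd h.1 hx
    · exact h.1
  have hdecomp : s i * (x * v) = x * ((x⁻¹ * s i * x) * v) := by group
  refine ⟨(x⁻¹ * s i * x) * v, hdecomp, ?_⟩
  have hdrop := cs.isLeftDescent_iff.mp ((isLeftInversion_simple_iff_isLeftDescent _ _ _).mp hu)
  have htri := cs.length_mul_le x ((x⁻¹ * s i * x) * v)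
  rw [← hdecomp] at htri
  have hshort := hv.2
  omega

theorem exists_weakLe_forall_length_le (u v : W) :
    ∃ m, weakLe cs m u ∧ weakLe cs m v ∧
      ∀ z, weakLe cs z u → weakLe cs z v → ℓ z ≤ ℓ m := by
  set S := cs.length '' {z | weakLe cs z u ∧ weakLe cs z v}
  have hbdd : BddAbove S := ⟨ℓ u, by
    rintro _ ⟨z, hz, rfl⟩
    exact cs.length_le_of_weakLe hz.1⟩
  obtain ⟨m, ⟨hmu, hmv⟩, hm⟩ :=
    Nat.sSup_mem (⟨0, 1, ⟨cs.one_weakLe u, cs.one_weakLe v⟩, cs.length_one⟩ : S.Nonempty) hbdd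
  exact ⟨m, hmu, hmv, fun z hzu hzv => hm ▸ le_csSup hbdd ⟨z, ⟨hzu, hzv⟩, rfl⟩⟩

theorem exists_weakMeet (u v : W) :
    ∃ m, weakLe cs m u ∧ weakLe cs m v ∧
      ∀ x, weakLe cs x u → weakLe cs x v → weakLe cs x m := by
  obtain ⟨m, hmu, hmv, hmax⟩ := cs.exists_weakLe_forall_length_le u v
  refine ⟨m, hmu, hmv, fun x hxu hxv => ?_⟩
  obtain rfl | hx := eq_or_ne x 1
  · exact cs.one_weakLe m
  obtain ⟨i, hxi⟩ := cs.exists_leftDescent_of_ne_one hx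
  have hui := cs.isLeftDescent_of_weakLe hxu hxi
  have hvi := cs.isLeftDescent_of_weakLe hxv hxi
  obtain ⟨g, hgu, hgv, hg⟩ := exists_weakMeet (s i * u) (s i * v)
  have hgi := cs.not_isLeftDescent_iff.mp (cs.not_isLeftDescent_of_weakLe_simple_mul hgu hui)
  have hsg : ℓ (s i * g) ≤ ℓ m := hmax _ (cs.simple_mul_weakLe_of_weakLe_simple_mul hgu hui)
    (cs.simple_mul_weakLe_of_weakLe_simple_mul hgv hvi)
  have hmi : cs.IsLeftDescent m i := by
    by_contra hmi
    have := cs.length_le_of_weakLe (hg m (cs.weakLe_simple_mul_of_not_isLeftDescent hmu hui hmi)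
      (cs.weakLe_simple_mul_of_not_isLeftDescent hmv hvi hmi))
    omega
  have hsm : s i * m = g := by
    have hle := hg _ ((cs.simple_mul_weakLe_simple_mul_iff hmi hui).mpr hmu)
      ((cs.simple_mul_weakLe_simple_mul_iff hmi hvi).mpr hmv)
    have := cs.isLeftDescent_iff.mp hmi
    exact cs.eq_of_weakLe_of_length_le hle (by omega)
  rw [← cs.simple_mul_weakLe_simple_mul_iff hxi hmi, hsm]
  exact hg _ ((cs.simple_mul_weakLe_simple_mul_iff hxi hui).mpr hxu)
    ((cs.simple_mul_weakLe_simple_mul_iff hxi hvi).mpr hxv)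
termination_by cs.length u + cs.length v
decreasing_by
  have := cs.isLeftDescent_iff.mp hui
  have := cs.isLeftDescent_iff.mp hvi
  omega

theorem exists_weakJoin_of_weakLe {u v w : W} (hu : weakLe cs u w) (hv : weakLe cs v w) :
    ∃ j, weakLe cs u j ∧ weakLe cs v j ∧
      ∀ x, weakLe cs u x → weakLe cs v x → weakLe cs j x := by
  obtain ⟨j, ⟨huj, hvj⟩, hmin⟩ :=
    (measure cs.length).wf.has_min {z | weakLe cs u z ∧ weakLe cs v z} ⟨w, hu, hv⟩
  refine ⟨j, huj, hvj, fun x hux hvx => ?_⟩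
  obtain ⟨m, hmj, hmx, hm⟩ := cs.exists_weakMeet j x
  have hmj' : m = j :=
    cs.eq_of_weakLe_of_length_le hmj (not_lt.mp (hmin m ⟨hm u huj hux, hm v hvj hvx⟩))
  exact hmj' ▸ hmx

theorem weakLe_of_forall_isLeftDescent {w₀ : W} (h : ∀ i, cs.IsLeftDescent w₀ i) (w : W) :
    weakLe cs w w₀ := by
  obtain rfl | hw := eq_or_ne w 1
  · exact cs.one_weakLe w₀
  obtain ⟨i, hi⟩ := cs.exists_leftDescent_of_ne_one hw
  have hle := cs.weakLe_simple_mul_of_not_isLeftDescent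
    (weakLe_of_forall_isLeftDescent h (s i * w)) (h i)
    (cs.isLeftDescent_iff_not_isLeftDescent_mul.mp hi)
  rw [← cs.simple_mul_simple_cancel_left i (w := w)]
  exact cs.simple_mul_weakLe_of_weakLe_simple_mul hle (h i)
termination_by cs.length w
decreasing_by exact hi

theorem exists_forall_weakLe [Finite W] : ∃ w₀ : W, ∀ w, weakLe cs w w₀ := by
  obtain ⟨w₀, hw₀⟩ := Finite.exists_max cs.length
  exact ⟨w₀, cs.weakLe_of_forall_isLeftDescent fun i =>
    (hw₀ _).lt_of_ne (cs.length_simple_mul_ne w₀ i)⟩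

end CoxeterSystem

/-- The right weak order on a finite Coxeter group is a lattice, with a unique maximal
element `w₀` satisfying `ℓ(w) + ℓ(w⁻¹w₀) = ℓ(w₀)` for all `w`. -/
theorem weak_order_lattice [Finite W] (cs : CoxeterSystem M W) :
    (∀ u v : W,
      (∃ m, weakLe cs m u ∧ weakLe cs m v ∧
        ∀ x, weakLe cs x u → weakLe cs x v → weakLe cs x m) ∧
      (∃ j, weakLe cs u j ∧ weakLe cs v j ∧
        ∀ x, weakLe cs u x → weakLe cs v x → weakLe cs j x)) ∧
    ∃! w₀ : W, (∀ w, weakLe cs w w₀) ∧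
      ∀ w, cs.length w + cs.length (w⁻¹ * w₀) = cs.length w₀ := by
  obtain ⟨w₀, htop⟩ := cs.exists_forall_weakLe
  refine ⟨fun u v => ⟨cs.exists_weakMeet u v, cs.exists_weakJoin_of_weakLe (htop u) (htop v)⟩,
    w₀, ⟨htop, fun w => ?_⟩, fun y hy => cs.weakLe_antisymm (htop y) (hy.1 w₀)⟩
  obtain ⟨v, rfl, hl⟩ := htop w
  rw [inv_mul_cancel_left, hl]
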